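/- arXiv:1102.1310 — 5 statements merged into one kernel-verified Lean document; each statement's English description precedes it below -/
import Mathlib

section
/- Let r, s ≥ 0 and let f_1, …, f_{r+s} : [0,1] → ℝ be integrable functions. Then I(f_1,…,f_r) · I(f_{r+1},…,f_{r+s}) = ∑_S I(g_1^S,…,g_{r+s}^S), where the sum is over all subsets S ⊆ {1,…,r+s} of cardinality r, and (g_1^S,…,g_{r+s}^S) is the interleaving that places f_1,…,f_r in their given order at the positions belonging to S and f_{r+1},…,f_{r+s} in their given order at the remaining positions (the shuffle product formula for iterated integrals). -/
/-!
Call a bijection `e : Fin r ⊕ Fin s ≃ Fin (r + s)` a shuffle if it is increasing on both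
summands, and let `interleave e` send `(u, v)` to the point whose coordinate at position `e x`
is the entry of `(u, v)` at `x`. Off the null set where two of the `r + s` coordinates
coincide, sorting them shows that `(u, v)` lies in `Δr × Δs` iff `interleave e (u, v) ∈ Δ(r+s)`
for exactly one shuffle `e` (with `Δn = unitSimplex n`). As `interleave e` is a measure-preserving permutation of
coordinates, Fubini splits the product of the two integrals into one iterated integral per
shuffle. Finally a shuffle is determined by the set `S` of positions taken by `Fin r`, and the
letter at a position `i` is its rank in `S` or in the complement of `S`.
-/

open MeasureTheory

/-- The closed simplex `0 ≤ t 0 ≤ t 1 ≤ ⋯ ≤ t (n-1) ≤ 1` in `Fin n → ℝ`. -/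
def unitSimplex (n : ℕ) : Set (Fin n → ℝ) :=
  {t | (∀ i j : Fin n, i ≤ j → t i ≤ t j) ∧ ∀ i, t i ∈ Set.Icc (0 : ℝ) 1}

open Finset Function

theorem mem_unitSimplex_iff {n : ℕ} {t : Fin n → ℝ} :
    t ∈ unitSimplex n ↔ Monotone t ∧ ∀ i, t i ∈ Set.Icc (0 : ℝ) 1 :=
  Iff.rfl

theorem measurableSet_unitSimplex (n : ℕ) : MeasurableSet (unitSimplex n) := by
  simp only [unitSimplex, Set.ofPred_and, Set.ofPred_forall]
  measurability

theorem setIntegral_unitSimplex_prod_indicator (n : ℕ) (φ : Fin n → ℝ → ℝ) :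
    ∫ t in unitSimplex n, ∏ i, (Set.Icc (0 : ℝ) 1).indicator (φ i) (t i) =
      ∫ t in unitSimplex n, ∏ i, φ i (t i) :=
  setIntegral_congr_fun (measurableSet_unitSimplex n) fun _ ht =>
    prod_congr rfl fun i _ => Set.indicator_of_mem (ht.2 i) _

theorem volume_setOf_apply_eq_apply {ι : Type*} [Fintype ι] {i j : ι} (hij : i ≠ j) :
    volume {x : ι → ℝ | x i = x j} = 0 := by
  classical
  let L : (ι → ℝ) →ₗ[ℝ] ℝ := LinearMap.proj (R := ℝ) (φ := fun _ : ι => ℝ) i - LinearMap.proj j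
  have hL : L ≠ 0 := fun h => by simpa [L, hij] using LinearMap.congr_fun h (Pi.single i 1)
  convert Measure.addHaar_submodule volume (LinearMap.ker L)
    (by simpa [LinearMap.ker_eq_top] using hL)
  ext x
  simp [L, sub_eq_zero]

theorem ae_injective_pi {ι : Type*} [Fintype ι] : ∀ᵐ x : ι → ℝ, Injective x := by
  have h : ∀ i j : ι, ∀ᵐ x : ι → ℝ, x i = x j → i = j := fun i j => by
    by_cases hij : i = j
    · exact .of_forall fun _ _ => hij
    · exact measure_mono_null (fun x hx => by simpa [hij] using hx)
        (volume_setOf_apply_eq_apply hij)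
  filter_upwards [ae_all_iff.2 fun i => ae_all_iff.2 (h i)] with x hx i j using hx i j

theorem Finset.sum_indicator_eq_indicator_of_existsUnique {ι X M : Type*} [AddCommMonoid M]
    {s : Finset ι} {A : ι → Set X} {B : Set X} {x : X} (f : X → M)
    (hA : ∀ i ∈ s, x ∈ A i → x ∈ B) (hB : x ∈ B → ∃! i, i ∈ s ∧ x ∈ A i) :
    ∑ i ∈ s, (A i).indicator f x = B.indicator f x := by
  by_cases hx : x ∈ B
  · obtain ⟨i, ⟨hi, hxi⟩, huniq⟩ := hB hx
    rw [sum_eq_single_of_mem i hi fun j hj hji =>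
        Set.indicator_of_notMem (fun hxj => hji (huniq j ⟨hj, hxj⟩)) f,
      Set.indicator_of_mem hxi, Set.indicator_of_mem hx]
  · rw [Set.indicator_of_notMem hx, sum_eq_zero fun i hi =>
      Set.indicator_of_notMem (fun hxi => hx (hA i hi hxi)) f]

section Sorting

variable {X γ : Type*} [LinearOrder γ] {n : ℕ}

theorem exists_equiv_monotone_comp_symm (e₀ : X ≃ Fin n) (w : X → γ) :
    ∃ e : X ≃ Fin n, Monotone (w ∘ e.symm) :=
  ⟨e₀.trans (Tuple.sort (w ∘ e₀.symm)).symm, Tuple.monotone_sort (w ∘ e₀.symm)⟩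

theorem eq_of_monotone_comp_symm {w : X → γ} (hw : Injective w) {e e' : X ≃ Fin n}
    (he : Monotone (w ∘ e.symm)) (he' : Monotone (w ∘ e'.symm)) : e = e' := by
  have hrange : Set.range (w ∘ e.symm) = Set.range (w ∘ e'.symm) := by
    simp only [Set.range_comp, Equiv.range_eq_univ]
  have hcomp := (StrictMono.range_inj (he.strictMono_of_injective (hw.comp e.symm.injective))
    (he'.strictMono_of_injective (hw.comp e'.symm.injective))).1 hrange
  exact Equiv.symm_bijective.injective (Equiv.ext fun i => hw (congrFun hcomp i))

end Sorting

def IsShuffle {α β γ : Type*} [Preorder α] [Preorder β] [Preorder γ] (e : α ⊕ β ≃ γ) : Prop :=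
  StrictMono (e ∘ Sum.inl) ∧ StrictMono (e ∘ Sum.inr)

section IsShuffle

variable {α β γ δ : Type*} [LinearOrder α] [LinearOrder β] [LinearOrder γ] [LinearOrder δ]
  {e : α ⊕ β ≃ γ} {w : α ⊕ β → δ}

theorem IsShuffle.monotone_comp_inl (he : IsShuffle e) (hw : Monotone (w ∘ e.symm)) :
    Monotone (w ∘ Sum.inl) := by
  simpa [comp_def] using hw.comp he.1.monotone

theorem IsShuffle.monotone_comp_inr (he : IsShuffle e) (hw : Monotone (w ∘ e.symm)) :
    Monotone (w ∘ Sum.inr) := by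
  simpa [comp_def] using hw.comp he.2.monotone

theorem isShuffle_of_monotone_comp_symm (hw : Injective w) (hl : Monotone (w ∘ Sum.inl))
    (hr : Monotone (w ∘ Sum.inr)) (he : Monotone (w ∘ e.symm)) : IsShuffle e := by
  have hlt : ∀ x y, w x < w y → e x < e y := fun x y h => he.reflect_lt (by simpa using h)
  exact ⟨fun a b h => hlt _ _ (hl.strictMono_of_injective (hw.comp Sum.inl_injective) h),
    fun a b h => hlt _ _ (hr.strictMono_of_injective (hw.comp Sum.inr_injective) h)⟩

theorem existsUnique_isShuffle_monotone {r s : ℕ} {w : Fin r ⊕ Fin s → δ} (hw : Injective w)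
    (hl : Monotone (w ∘ Sum.inl)) (hr : Monotone (w ∘ Sum.inr)) :
    ∃! e : Fin r ⊕ Fin s ≃ Fin (r + s), IsShuffle e ∧ Monotone (w ∘ e.symm) := by
  obtain ⟨e, he⟩ := exists_equiv_monotone_comp_symm finSumFinEquiv w
  exact ⟨e, ⟨isShuffle_of_monotone_comp_symm hw hl hr he, he⟩,
    fun e' he' => eq_of_monotone_comp_symm hw he'.2 he⟩

end IsShuffle

section Interleave

variable {α β ι : Type*}

noncomputable def interleave (e : α ⊕ β ≃ ι) : ((α → ℝ) × (β → ℝ)) ≃ᵐ (ι → ℝ) :=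
  (MeasurableEquiv.sumPiEquivProdPi fun _ => ℝ).symm.trans
    (MeasurableEquiv.piCongrLeft (fun _ => ℝ) e)

theorem interleave_apply (e : α ⊕ β ≃ ι) (p : (α → ℝ) × (β → ℝ)) (i : ι) :
    interleave e p i = Sum.elim p.1 p.2 (e.symm i) := by
  obtain ⟨x, rfl⟩ := e.surjective i
  rw [e.symm_apply_apply]
  simp only [interleave, MeasurableEquiv.trans_apply, MeasurableEquiv.piCongrLeft_apply_apply]
  cases x <;> rfl

theorem prod_interleave {M : Type*} [CommMonoid M] [Fintype α] [Fintype β] [Fintype ι]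
    (e : α ⊕ β ≃ ι) (G : α ⊕ β → ℝ → M) (p : (α → ℝ) × (β → ℝ)) :
    ∏ i, G (e.symm i) (interleave e p i) =
      (∏ a, G (.inl a) (p.1 a)) * ∏ b, G (.inr b) (p.2 b) := by
  simp only [interleave_apply]
  rw [e.symm.prod_comp (fun x => G x (Sum.elim p.1 p.2 x)), Fintype.prod_sum_type]
  rfl

variable [Fintype α] [Fintype β] [Fintype ι]

theorem measurePreserving_interleave (e : α ⊕ β ≃ ι) :
    MeasurePreserving (interleave e) volume volume :=
  (volume_measurePreserving_piCongrLeft (fun _ => ℝ) e).comp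
    (volume_measurePreserving_sumPiEquivProdPi_symm fun _ => ℝ)

theorem setIntegral_interleave_preimage (e : α ⊕ β ≃ ι) (G : α ⊕ β → ℝ → ℝ) (T : Set (ι → ℝ)) :
    ∫ t in T, ∏ i, G (e.symm i) (t i) =
      ∫ p in interleave e ⁻¹' T, (∏ a, G (.inl a) (p.1 a)) * ∏ b, G (.inr b) (p.2 b) := by
  rw [← (measurePreserving_interleave e).setIntegral_preimage_emb
    (interleave e).measurableEmbedding]
  simp only [prod_interleave]

theorem ae_injective_sumElim : ∀ᵐ p : (α → ℝ) × (β → ℝ), Injective (Sum.elim p.1 p.2) :=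
  (volume_measurePreserving_sumPiEquivProdPi_symm fun _ : α ⊕ β => ℝ).quasiMeasurePreserving.ae
    ae_injective_pi

end Interleave

section Shuffles

variable {r s : ℕ}

noncomputable def shuffles (r s : ℕ) : Finset (Fin r ⊕ Fin s ≃ Fin (r + s)) := by
  classical exact univ.filter IsShuffle

theorem mem_shuffles {e : Fin r ⊕ Fin s ≃ Fin (r + s)} : e ∈ shuffles r s ↔ IsShuffle e := by
  simp [shuffles]

theorem sum_indicator_preimage_unitSimplex (F : (Fin r → ℝ) × (Fin s → ℝ) → ℝ)
    {p : (Fin r → ℝ) × (Fin s → ℝ)} (hp : Injective (Sum.elim p.1 p.2)) :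
    ∑ e ∈ shuffles r s, (interleave e ⁻¹' unitSimplex (r + s)).indicator F p =
      (unitSimplex r ×ˢ unitSimplex s).indicator F p := by
  set w := Sum.elim p.1 p.2
  have hA : ∀ e : Fin r ⊕ Fin s ≃ Fin (r + s), p ∈ interleave e ⁻¹' unitSimplex (r + s) ↔
      Monotone (w ∘ e.symm) ∧ ∀ x, w x ∈ Set.Icc (0 : ℝ) 1 := fun e => by
    have h : interleave e p = w ∘ e.symm := funext (interleave_apply e p)
    rw [Set.mem_preimage, mem_unitSimplex_iff, h, e.symm.surjective.forall]
    rfl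
  have hB : p ∈ unitSimplex r ×ˢ unitSimplex s ↔
      Monotone (w ∘ Sum.inl) ∧ Monotone (w ∘ Sum.inr) ∧ ∀ x, w x ∈ Set.Icc (0 : ℝ) 1 := by
    simp only [Set.mem_prod, mem_unitSimplex_iff, Sum.forall, w, Sum.elim_comp_inl,
      Sum.elim_comp_inr, Sum.elim_inl, Sum.elim_inr]
    tauto
  refine sum_indicator_eq_indicator_of_existsUnique F (fun e he hpe => ?_) fun hpB => ?_
  · rw [mem_shuffles] at he
    rw [hA] at hpe
    exact hB.2 ⟨he.monotone_comp_inl hpe.1, he.monotone_comp_inr hpe.1, hpe.2⟩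
  · obtain ⟨hl, hr, h01⟩ := hB.1 hpB
    simpa only [mem_shuffles, hA, h01, implies_true, and_true] using
      existsUnique_isShuffle_monotone hp hl hr

theorem setIntegral_unitSimplex_mul_setIntegral_unitSimplex (G : Fin r ⊕ Fin s → ℝ → ℝ)
    (hG : ∀ x, Integrable (G x)) :
    (∫ u in unitSimplex r, ∏ a, G (.inl a) (u a)) *
        (∫ v in unitSimplex s, ∏ b, G (.inr b) (v b)) =
      ∑ e ∈ shuffles r s, ∫ t in unitSimplex (r + s), ∏ i, G (e.symm i) (t i) := by
  set F : (Fin r → ℝ) × (Fin s → ℝ) → ℝ :=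
    fun p => (∏ a, G (.inl a) (p.1 a)) * ∏ b, G (.inr b) (p.2 b)
  have hF : Integrable F :=
    (Integrable.fintype_prod fun a => hG (.inl a)).mul_prod
      (Integrable.fintype_prod fun b => hG (.inr b))
  have hA : ∀ e : Fin r ⊕ Fin s ≃ Fin (r + s),
      MeasurableSet (interleave e ⁻¹' unitSimplex (r + s)) :=
    fun e => (interleave e).measurable (measurableSet_unitSimplex _)
  calc
    _ = ∫ p in unitSimplex r ×ˢ unitSimplex s, F p := (setIntegral_prod_mul _ _ _ _).symm
    _ = ∫ p, ∑ e ∈ shuffles r s, (interleave e ⁻¹' unitSimplex (r + s)).indicator F p := by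
      rw [← integral_indicator ((measurableSet_unitSimplex r).prod (measurableSet_unitSimplex s))]
      refine integral_congr_ae ?_
      filter_upwards [ae_injective_sumElim] with p hp
      exact (sum_indicator_preimage_unitSimplex F hp).symm
    _ = ∑ e ∈ shuffles r s, ∫ p in interleave e ⁻¹' unitSimplex (r + s), F p := by
      rw [integral_finsetSum _ fun e _ => hF.indicator (hA e)]
      simp only [integral_indicator (hA _)]
    _ = _ := sum_congr rfl fun e _ => (setIntegral_interleave_preimage e G _).symm

theorem card_filter_lt_image_univ {m : ℕ} {g : Fin m → ℕ} (hg : StrictMono g) (a : Fin m) :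
    ((univ.image g).filter (· < g a)).card = a := by
  rw [filter_image, card_image_of_injective _ hg.injective]
  simp only [hg.lt_iff_lt, filter_gt_eq_Iio, Fin.card_Iio]

def shuffleLeft (e : Fin r ⊕ Fin s ≃ Fin (r + s)) : Finset ℕ :=
  univ.image fun a => (e (.inl a) : ℕ)

/-- `f (shuffleIndex r s S i)` is the function that the interleaving attached to `S` places at
position `i`. -/
def shuffleIndex (r s : ℕ) (S : Finset ℕ) (i : Fin (r + s)) : ℕ :=
  if (i : ℕ) ∈ S then (S.filter (fun j => j < (i : ℕ))).card
  else r + (((range (r + s)) \ S).filter (fun j => j < (i : ℕ))).card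

theorem range_sdiff_shuffleLeft (e : Fin r ⊕ Fin s ≃ Fin (r + s)) :
    range (r + s) \ shuffleLeft e = univ.image fun b => (e (.inr b) : ℕ) := by
  ext k
  simp only [shuffleLeft, mem_sdiff, mem_range, mem_image, mem_univ, true_and, not_exists]
  constructor
  · rintro ⟨hk, hl⟩
    rcases h : e.symm ⟨k, hk⟩ with a | b
    · exact absurd (by rw [← h, e.apply_symm_apply]) (hl a)
    · exact ⟨b, by rw [← h, e.apply_symm_apply]⟩
  · rintro ⟨b, rfl⟩
    exact ⟨(e _).isLt, fun a h => Sum.inl_ne_inr (e.injective (Fin.ext h))⟩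

theorem shuffleLeft_mem_powersetCard (e : Fin r ⊕ Fin s ≃ Fin (r + s)) :
    shuffleLeft e ∈ powersetCard r (range (r + s)) := by
  refine mem_powersetCard.2 ⟨fun k hk => ?_, ?_⟩
  · obtain ⟨a, -, rfl⟩ := mem_image.1 hk
    exact mem_range.2 (e _).isLt
  · rw [shuffleLeft, card_image_of_injective _ ?_, card_univ, Fintype.card_fin]
    exact fun a b h => Sum.inl_injective (e.injective (Fin.ext h))

theorem IsShuffle.shuffleIndex_shuffleLeft {e : Fin r ⊕ Fin s ≃ Fin (r + s)} (he : IsShuffle e)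
    (i : Fin (r + s)) : shuffleIndex r s (shuffleLeft e) i = finSumFinEquiv (e.symm i) := by
  obtain ⟨x, rfl⟩ := e.surjective i
  rw [e.symm_apply_apply]
  rcases x with a | b
  · have hmem : ((e (.inl a)) : ℕ) ∈ shuffleLeft e := mem_image_of_mem _ (mem_univ a)
    rw [shuffleIndex, if_pos hmem]
    exact card_filter_lt_image_univ (g := fun a => (e (.inl a) : ℕ))
      (Fin.val_strictMono.comp he.1) a
  · have hmem : ((e (.inr b)) : ℕ) ∈ range (r + s) \ shuffleLeft e := by
      rw [range_sdiff_shuffleLeft]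
      exact mem_image_of_mem _ (mem_univ b)
    rw [shuffleIndex, if_neg (mem_sdiff.1 hmem).2, range_sdiff_shuffleLeft,
      card_filter_lt_image_univ (g := fun b => (e (.inr b) : ℕ)) (Fin.val_strictMono.comp he.2) b]
    rfl

theorem injOn_shuffleLeft :
    Set.InjOn shuffleLeft (shuffles r s : Set (Fin r ⊕ Fin s ≃ Fin (r + s))) := by
  intro e he e' he' h
  rw [mem_coe, mem_shuffles] at he he'
  refine Equiv.symm_bijective.injective (Equiv.ext fun i => finSumFinEquiv.injective (Fin.ext ?_))
  rw [← he.shuffleIndex_shuffleLeft, ← he'.shuffleIndex_shuffleLeft, h]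

theorem surjOn_shuffleLeft :
    Set.SurjOn shuffleLeft (shuffles r s : Set (Fin r ⊕ Fin s ≃ Fin (r + s)))
      (powersetCard r (range (r + s)) : Set (Finset ℕ)) := by
  intro S hS
  obtain ⟨hsub, hcard⟩ := mem_powersetCard.1 hS
  set T := range (r + s) \ S
  have hcard' : T.card = s := by
    rw [card_sdiff_of_subset hsub, card_range, hcard, Nat.add_sub_cancel_left]
  let g : Fin r ⊕ Fin s → Fin (r + s) := Sum.elim
    (fun a => ⟨S.orderEmbOfFin hcard a, mem_range.1 (hsub (S.orderEmbOfFin_mem hcard a))⟩)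
    (fun b => ⟨T.orderEmbOfFin hcard' b,
      mem_range.1 (mem_sdiff.1 (T.orderEmbOfFin_mem hcard' b)).1⟩)
  have hg : Injective g := by
    refine Injective.sumElim (fun a b h => (S.orderEmbOfFin hcard).injective (congrArg Fin.val h))
      (fun a b h => (T.orderEmbOfFin hcard').injective (congrArg Fin.val h))
      fun a b h => (mem_sdiff.1 (T.orderEmbOfFin_mem hcard' b)).2 ?_
    exact Fin.mk.inj_iff.1 h ▸ S.orderEmbOfFin_mem hcard a
  let e := Equiv.ofBijective g ((Fintype.bijective_iff_injective_and_card g).2 ⟨hg, by simp⟩)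
  refine ⟨e, mem_shuffles.2 ⟨fun a b h => ?_, fun a b h => ?_⟩, ?_⟩
  · exact Fin.mk_lt_mk.2 ((S.orderEmbOfFin hcard).strictMono h)
  · exact Fin.mk_lt_mk.2 ((T.orderEmbOfFin hcard').strictMono h)
  · exact image_orderEmbOfFin_univ S hcard

theorem sum_shuffles_eq_sum_powersetCard {M : Type*} [AddCommMonoid M]
    (φ : (Fin (r + s) → ℕ) → M) :
    ∑ e ∈ shuffles r s, φ (fun i => finSumFinEquiv (e.symm i)) =
      ∑ S ∈ powersetCard r (range (r + s)), φ (shuffleIndex r s S) :=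
  sum_nbij shuffleLeft (fun e _ => shuffleLeft_mem_powersetCard e) injOn_shuffleLeft
    surjOn_shuffleLeft fun e he => by rw [funext (mem_shuffles.1 he).shuffleIndex_shuffleLeft]

end Shuffles

/-- The shuffle product formula for iterated integrals: the product of the
iterated integrals of `f 0, …, f (r-1)` and of `f r, …, f (r+s-1)` equals the sum,
over all subsets `S ⊆ {0,…,r+s-1}` of cardinality `r`, of the iterated integral of
the interleaving placing `f 0, …, f (r-1)` (in order) at the positions of `S` and
`f r, …, f (r+s-1)` (in order) at the remaining positions. -/
theorem iteratedIntegral_shuffle (r s : ℕ) (f : ℕ → ℝ → ℝ)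
    (hf : ∀ i < r + s, IntegrableOn (f i) (Set.Icc (0 : ℝ) 1)) :
    (∫ t in unitSimplex r, ∏ i : Fin r, f i (t i)) *
      (∫ t in unitSimplex s, ∏ i : Fin s, f (r + i) (t i)) =
    ∑ S ∈ Finset.powersetCard r (Finset.range (r + s)),
      ∫ t in unitSimplex (r + s), ∏ i : Fin (r + s),
        (if (i : ℕ) ∈ S then
          f ((S.filter (fun j => j < (i : ℕ))).card) (t i)
        else
          f (r + (((Finset.range (r + s)) \ S).filter (fun j => j < (i : ℕ))).card) (t i)) := by
  -- Cutting `f` off outside `[0, 1]` makes it integrable on `ℝ` without changing any integral.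
  set G : Fin r ⊕ Fin s → ℝ → ℝ := fun x => (Set.Icc 0 1).indicator (f (finSumFinEquiv x))
  have hG : ∀ x, Integrable (G x) := fun x =>
    (hf _ (finSumFinEquiv x).isLt).integrable_indicator measurableSet_Icc
  calc
    _ = (∫ u in unitSimplex r, ∏ a, G (.inl a) (u a)) *
        (∫ v in unitSimplex s, ∏ b, G (.inr b) (v b)) := by
      simp only [G, setIntegral_unitSimplex_prod_indicator]
      rfl
    _ = ∑ e ∈ shuffles r s, ∫ t in unitSimplex (r + s), ∏ i, G (e.symm i) (t i) :=
      setIntegral_unitSimplex_mul_setIntegral_unitSimplex G hG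
    _ = ∑ S ∈ powersetCard r (range (r + s)),
        ∫ t in unitSimplex (r + s), ∏ i, f (shuffleIndex r s S i) (t i) := by
      simp only [G, setIntegral_unitSimplex_prod_indicator]
      exact sum_shuffles_eq_sum_powersetCard
        (fun κ => ∫ t in unitSimplex (r + s), ∏ i, f (κ i) (t i))
    _ = _ := by simp only [shuffleIndex, apply_ite f, ite_apply]
end

section
/- Let f_1, …, f_n : [0,1] → ℝ be integrable and let c ∈ [0,1]. Then the integral of f_1(t_1)⋯f_n(t_n) over the simplex 0 ≤ t_1 ≤ ⋯ ≤ t_n ≤ 1 equals ∑_{i=0}^{n} A_i · B_i, where A_i is the integral of f_1(t_1)⋯f_i(t_i) over the simplex 0 ≤ t_1 ≤ ⋯ ≤ t_i ≤ c and B_i is the integral of f_{i+1}(t_{i+1})⋯f_n(t_n) over the simplex c ≤ t_{i+1} ≤ ⋯ ≤ t_n ≤ 1 (the composition-of-paths formula for iterated integrals). -/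
open MeasureTheory

/-- The closed simplex `a ≤ t 0 ≤ t 1 ≤ ⋯ ≤ t (n-1) ≤ b` in `Fin n → ℝ`. -/
def orderedSimplex (n : ℕ) (a b : ℝ) : Set (Fin n → ℝ) :=
  {t | (∀ i j : Fin n, i ≤ j → t i ≤ t j) ∧ ∀ i, t i ∈ Set.Icc a b}

/-! Cut the simplex `a ≤ t 0 ≤ ⋯ ≤ t (n-1) ≤ b` into the pieces where exactly the first `i`
coordinates are `≤ c`. Splitting `t` into its first `i` and last `n - i` coordinates maps such a
piece onto the product of the simplex over `[a, c]` with the simplex over `(c, b]`, which differs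
from the simplex over `[c, b]` only by a null set. Fubini then factors the integral of
`∏ j, f j (t j)` over the piece as `A i * B i`. -/

open Set

theorem Fin.monotone_append_iff {α : Type*} [Preorder α] {m k : ℕ} {x : Fin m → α}
    {y : Fin k → α} (hxy : ∀ i j, x i ≤ y j) :
    Monotone (Fin.append x y) ↔ Monotone x ∧ Monotone y := by
  constructor
  · intro h
    refine ⟨fun i j hij => ?_, fun i j hij => ?_⟩
    · simpa using @h (Fin.castAdd k i) (Fin.castAdd k j) (Fin.le_def.2 hij)
    · simpa using h ((Fin.natAdd_le_natAdd_iff m).2 hij)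
  · rintro ⟨hx, hy⟩ i j hij
    induction i using Fin.addCases with
    | left i =>
      induction j using Fin.addCases with
      | left j => simpa using hx (Fin.le_def.2 (Fin.le_def.1 hij))
      | right j => simpa using hxy i j
    | right i =>
      induction j using Fin.addCases with
      | left j => exact absurd (Fin.le_def.1 hij) (by simp; omega)
      | right j => simpa using hy ((Fin.natAdd_le_natAdd_iff m).1 hij)

def Fin.appendMeasurableEquiv (α : Type*) [MeasurableSpace α] (m k : ℕ) :
    (Fin m → α) × (Fin k → α) ≃ᵐ (Fin (m + k) → α) :=
  (MeasurableEquiv.sumPiEquivProdPi fun _ => α).symm.trans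
    (MeasurableEquiv.piCongrLeft (fun _ => α) finSumFinEquiv)

@[simp]
theorem Fin.appendMeasurableEquiv_apply {α : Type*} [MeasurableSpace α] {m k : ℕ}
    (p : (Fin m → α) × (Fin k → α)) :
    Fin.appendMeasurableEquiv α m k p = Fin.append p.1 p.2 := by
  obtain ⟨x, y⟩ := p
  funext j
  refine Fin.addCases (fun i => ?_) (fun i => ?_) j
  · rw [Fin.append_left, ← finSumFinEquiv_apply_left]
    exact Equiv.piCongrLeft_sumInl (fun _ => α) finSumFinEquiv x y i
  · rw [Fin.append_right, ← finSumFinEquiv_apply_right]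
    exact Equiv.piCongrLeft_sumInr (fun _ => α) finSumFinEquiv x y i

theorem MeasureTheory.measurePreserving_finAppend {α : Type*} [MeasurableSpace α]
    (μ : Measure α) [SigmaFinite μ] (m k : ℕ) :
    MeasurePreserving (Fin.appendMeasurableEquiv α m k)
      ((Measure.pi fun _ => μ).prod (Measure.pi fun _ => μ)) (Measure.pi fun _ => μ) :=
  (measurePreserving_piCongrLeft (fun _ => μ) finSumFinEquiv).comp
    (measurePreserving_sumPiEquivProdPi_symm fun _ => μ)

theorem MeasureTheory.IntegrableOn.fin_nat_prod {𝕜 : Type*} [RCLike 𝕜] {n : ℕ}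
    {E : Fin n → Type*} {mE : ∀ i, MeasurableSpace (E i)} {μ : (i : Fin n) → Measure (E i)}
    [∀ i, SigmaFinite (μ i)] {s : ∀ i, Set (E i)} {f : (i : Fin n) → E i → 𝕜}
    (hf : ∀ i, IntegrableOn (f i) (s i) (μ i)) :
    IntegrableOn (fun x : (i : Fin n) → E i => ∏ i, f i (x i)) (univ.pi s) (Measure.pi μ) := by
  rw [IntegrableOn, Measure.restrict_pi_pi]
  exact .fin_nat_prod hf

theorem mem_orderedSimplex {n : ℕ} {a b : ℝ} {t : Fin n → ℝ} :
    t ∈ orderedSimplex n a b ↔ Monotone t ∧ ∀ i, t i ∈ Icc a b :=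
  Iff.rfl

theorem measurableSet_orderedSimplex (n : ℕ) (a b : ℝ) :
    MeasurableSet (orderedSimplex n a b) := by
  simp only [orderedSimplex, ofPred_and, ofPred_forall]
  measurability

def simplexCut (n i : ℕ) (a b c : ℝ) : Set (Fin n → ℝ) :=
  orderedSimplex n a b ∩ {t | ∀ j : Fin n, t j ≤ c ↔ (j : ℕ) < i}

theorem measurableSet_simplexCut (n i : ℕ) (a b c : ℝ) :
    MeasurableSet (simplexCut n i a b c) := by
  refine (measurableSet_orderedSimplex n a b).inter ?_
  simp only [ofPred_forall]
  refine MeasurableSet.iInter fun j => ?_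
  by_cases h : (j : ℕ) < i <;> simp only [h, iff_true, iff_false, not_le]
  · exact measurableSet_le (measurable_pi_apply j) measurable_const
  · exact measurableSet_lt measurable_const (measurable_pi_apply j)

theorem pairwiseDisjoint_simplexCut (n : ℕ) (a b c : ℝ) :
    (Finset.range (n + 1) : Set ℕ).PairwiseDisjoint (simplexCut n · a b c) := by
  intro i hi j hj hij
  simp only [Finset.coe_range, mem_Iio] at hi hj
  refine disjoint_left.2 fun t hti htj => ?_
  rcases hij.lt_or_gt with h | h
  · have := (hti.2 ⟨i, by omega⟩).symm.trans (htj.2 ⟨i, by omega⟩)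
    simp only [lt_self_iff_false, false_iff] at this
    exact this h
  · have := (htj.2 ⟨j, by omega⟩).symm.trans (hti.2 ⟨j, by omega⟩)
    simp only [lt_self_iff_false, false_iff] at this
    exact this h

theorem orderedSimplex_eq_biUnion_simplexCut (n : ℕ) (a b c : ℝ) :
    orderedSimplex n a b = ⋃ i ∈ Finset.range (n + 1), simplexCut n i a b c := by
  ext t
  simp only [simplexCut, mem_iUnion, mem_inter_iff, mem_ofPred_eq, Finset.mem_range,
    exists_prop]
  refine ⟨fun ht => ?_, fun ⟨_, _, ht, _⟩ => ht⟩
  classical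
  have hP : ∃ m : ℕ, ∀ j : Fin n, m ≤ (j : ℕ) → c < t j :=
    ⟨n, fun j hj => absurd j.isLt (by omega)⟩
  refine ⟨Nat.find hP, Nat.lt_succ_of_le (Nat.find_min' hP fun j hj => absurd j.isLt (by omega)),
    ht, fun j => ⟨fun hj => ?_, fun hj => ?_⟩⟩
  · by_contra! h
    exact (Nat.find_spec hP j h).not_ge hj
  · by_contra hj'
    exact Nat.find_min hP hj fun j' hjj' =>
      (not_le.1 hj').trans_le (ht.1 _ _ (Fin.le_def.2 hjj'))

theorem append_mem_simplexCut_iff {m k : ℕ} {a b c : ℝ} (hac : a ≤ c) (hcb : c ≤ b)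
    (x : Fin m → ℝ) (y : Fin k → ℝ) :
    Fin.append x y ∈ simplexCut (m + k) m a b c ↔
      x ∈ orderedSimplex m a c ∧ y ∈ orderedSimplex k c b ∩ {y | ∀ j, c < y j} := by
  simp only [simplexCut, mem_inter_iff, mem_orderedSimplex, mem_ofPred_eq]
  rw [Fin.forall_fin_add, Fin.forall_fin_add]
  simp only [Fin.append_left, Fin.append_right, Fin.val_castAdd, Fin.val_natAdd, Fin.is_lt,
    iff_true, add_lt_iff_neg_left, not_lt_zero, iff_false, not_le]
  constructor
  · rintro ⟨⟨hmono, hx, hy⟩, hxc, hcy⟩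
    obtain ⟨hx_mono, hy_mono⟩ :=
      (Fin.monotone_append_iff fun i j => (hxc i).trans (hcy j).le).1 hmono
    exact ⟨⟨hx_mono, fun i => ⟨(hx i).1, hxc i⟩⟩,
      ⟨hy_mono, fun j => ⟨(hcy j).le, (hy j).2⟩⟩, hcy⟩
  · rintro ⟨⟨hx_mono, hx⟩, ⟨hy_mono, hy⟩, hcy⟩
    have hxc i : x i ≤ c := (hx i).2
    exact ⟨⟨(Fin.monotone_append_iff fun i j => (hxc i).trans (hcy j).le).2 ⟨hx_mono, hy_mono⟩,
      fun i => ⟨(hx i).1, (hxc i).trans hcb⟩, fun j => ⟨hac.trans (hy j).1, (hy j).2⟩⟩,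
      hxc, hcy⟩

theorem orderedSimplex_inter_forall_lt_ae_eq {μ : Measure ℝ} [SigmaFinite μ]
    [NullSingletonClass μ] (k : ℕ) (b c : ℝ) :
    (orderedSimplex k c b ∩ {y | ∀ j, c < y j} : Set (Fin k → ℝ))
      =ᵐ[Measure.pi fun _ => μ] orderedSimplex k c b := by
  have hne : ∀ᵐ y ∂Measure.pi (fun _ : Fin k => μ), ∀ j, y j ≠ c :=
    ae_all_iff.2 fun j => Measure.ae_eval_ne (fun _ => μ) j c
  refine Filter.eventuallyEq_set.2 ?_
  filter_upwards [hne] with y hy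
  exact ⟨fun h => h.1, fun h => ⟨h, fun j => (h.2 j).1.lt_of_ne (hy j).symm⟩⟩

theorem setIntegral_simplexCut (μ : Measure ℝ) [SigmaFinite μ] [NullSingletonClass μ]
    {m k : ℕ} {a b c : ℝ} (hac : a ≤ c) (hcb : c ≤ b) (f : ℕ → ℝ → ℝ) :
    ∫ t in simplexCut (m + k) m a b c, ∏ j : Fin (m + k), f j (t j) ∂(Measure.pi fun _ => μ) =
      (∫ x in orderedSimplex m a c, ∏ j : Fin m, f j (x j) ∂(Measure.pi fun _ => μ)) *
        ∫ y in orderedSimplex k c b, ∏ j : Fin k, f (m + j) (y j) ∂(Measure.pi fun _ => μ) := by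
  have hpre : Fin.appendMeasurableEquiv ℝ m k ⁻¹' simplexCut (m + k) m a b c =
      orderedSimplex m a c ×ˢ (orderedSimplex k c b ∩ {y | ∀ j, c < y j}) := by
    ext ⟨x, y⟩
    simp only [mem_preimage, Fin.appendMeasurableEquiv_apply, mem_prod]
    exact append_mem_simplexCut_iff hac hcb x y
  calc _ = ∫ p in orderedSimplex m a c ×ˢ (orderedSimplex k c b ∩ {y | ∀ j, c < y j}),
          (∏ j : Fin m, f j (p.1 j)) * ∏ j : Fin k, f (m + j) (p.2 j)
            ∂(Measure.pi fun _ => μ).prod (Measure.pi fun _ => μ) := by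
        rw [← hpre, ← (measurePreserving_finAppend μ m k).setIntegral_preimage_emb
          (Fin.appendMeasurableEquiv ℝ m k).measurableEmbedding]
        simp [Fin.prod_univ_add]
    _ = _ := by
        rw [setIntegral_prod_mul (fun x : Fin m → ℝ => ∏ j : Fin m, f j (x j))
          (fun y : Fin k → ℝ => ∏ j : Fin k, f (m + j) (y j)),
          setIntegral_congr_set (orderedSimplex_inter_forall_lt_ae_eq k b c)]

theorem setIntegral_orderedSimplex_eq_sum (μ : Measure ℝ) [SigmaFinite μ]
    [NullSingletonClass μ] {n : ℕ} {a b c : ℝ} (hac : a ≤ c) (hcb : c ≤ b) (f : ℕ → ℝ → ℝ)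
    (hf : ∀ i < n, IntegrableOn (f i) (Icc a b) μ) :
    ∫ t in orderedSimplex n a b, ∏ i : Fin n, f i (t i) ∂(Measure.pi fun _ => μ) =
      ∑ i ∈ Finset.range (n + 1),
        (∫ t in orderedSimplex i a c, ∏ j : Fin i, f j (t j) ∂(Measure.pi fun _ => μ)) *
          ∫ t in orderedSimplex (n - i) c b, ∏ j : Fin (n - i), f (i + j) (t j)
            ∂(Measure.pi fun _ => μ) := by
  have hint : IntegrableOn (fun t : Fin n → ℝ => ∏ i : Fin n, f i (t i))
      (orderedSimplex n a b) (Measure.pi fun _ => μ) :=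
    (IntegrableOn.fin_nat_prod fun i => hf i i.isLt).mono_set fun t ht i _ => ht.2 i
  rw [orderedSimplex_eq_biUnion_simplexCut n a b c,
    integral_biUnion_finset _ (fun i _ => measurableSet_simplexCut n i a b c)
      (pairwiseDisjoint_simplexCut n a b c) fun i _ => hint.mono_set inter_subset_left]
  refine Finset.sum_congr rfl fun i hi => ?_
  obtain ⟨k, rfl⟩ := Nat.exists_eq_add_of_le (Finset.mem_range_succ_iff.1 hi)
  rw [Nat.add_sub_cancel_left]
  exact setIntegral_simplexCut μ hac hcb f

/-- The composition-of-paths formula for iterated integrals: for `c ∈ [0,1]`, the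
integral of `f 0 (t 0) ⋯ f (n-1) (t (n-1))` over the simplex
`0 ≤ t 0 ≤ ⋯ ≤ t (n-1) ≤ 1` equals `∑_{i=0}^{n} A i * B i`, where `A i` integrates
the first `i` functions over the simplex with entries in `[0, c]` and `B i`
integrates the remaining `n - i` functions over the simplex with entries in `[c, 1]`. -/
theorem iteratedIntegral_comp_paths (n : ℕ) (c : ℝ) (hc : c ∈ Set.Icc (0 : ℝ) 1)
    (f : ℕ → ℝ → ℝ) (hf : ∀ i < n, IntegrableOn (f i) (Set.Icc (0 : ℝ) 1)) :
    (∫ t in orderedSimplex n 0 1, ∏ i : Fin n, f i (t i)) =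
    ∑ i ∈ Finset.range (n + 1),
      (∫ t in orderedSimplex i 0 c, ∏ j : Fin i, f j (t j)) *
        (∫ t in orderedSimplex (n - i) c 1, ∏ j : Fin (n - i), f (i + j) (t j)) :=
  setIntegral_orderedSimplex_eq_sum volume hc.1 hc.2 f hf
end

section
/- Euler's identity ζ(3) = ζ(1,2) holds, i.e. ∑_{k≥1} 1/k³ = ∑_{0<j<k} 1/(j·k²). -/
/-!
Evaluate the Tornheim sum `T = ∑_{m,n ≥ 1} 1 / (m n (m + n))` in two ways. Summing over `n` first
telescopes, `∑_n 1 / (n (m + n)) = H_m / m`, so `T = ∑_m H_m / m² = ζ(3) + ζ(1,2)`. On the other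
hand `1 / (m n (m + n)) = 1 / (m (m + n)²) + 1 / (n (m + n)²)`, and summing `1 / (m (m + n)²)`
along the lines `m + n = k` gives `ζ(1,2)`, so `T = 2 ζ(1,2)`. `T` converges absolutely since
`m + n ≥ √(m n)` bounds its terms by `(m n)^(-3/2)`.
-/

open Finset Filter Topology

theorem Antitone.hasSum_sub_add {g : ℕ → ℝ} (hg : Antitone g) (hlim : Tendsto g atTop (𝓝 0))
    (d : ℕ) : HasSum (fun k => g k - g (k + d)) (∑ i ∈ range d, g i) := by
  rw [hasSum_iff_tendsto_nat_of_nonneg fun k => sub_nonneg.2 (hg (Nat.le_add_right k d))]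
  have hpartial (N : ℕ) : ∑ k ∈ range N, (g k - g (k + d)) =
      ∑ i ∈ range d, g i - ∑ i ∈ range d, g (N + i) := by
    have h1 := sum_range_add g N d
    have h2 := sum_range_add g d N
    rw [Nat.add_comm d N] at h2
    simp only [sum_sub_distrib, Nat.add_comm _ d]
    linarith
  have htail : Tendsto (fun N => ∑ i ∈ range d, g (N + i)) atTop (𝓝 0) := by
    simpa using tendsto_finsetSum (range d) fun i _ => hlim.comp (tendsto_add_atTop_nat i)
  simp_rw [hpartial]
  simpa using tendsto_const_nhds.sub htail

theorem HasSum.sum_antidiagonal {A α : Type*} [AddMonoid A] [HasAntidiagonal A]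
    [AddCommMonoid α] [TopologicalSpace α] [ContinuousAdd α] [RegularSpace α]
    {f : A × A → α} {a : α} (hf : HasSum f a) :
    HasSum (fun n => ∑ p ∈ antidiagonal n, f p) a := by
  refine (HasAntidiagonal.sigmaAntidiagonalEquivProd.hasSum_iff.2 hf).sigma fun n => ?_
  rw [← sum_finset_coe]
  exact hasSum_fintype _

theorem one_div_mul_mul_add_le_rpow {s t : ℝ} (hs : 0 < s) (ht : 0 < t) :
    1 / (s * t * (s + t)) ≤ s ^ (-(3 / 2) : ℝ) * t ^ (-(3 / 2) : ℝ) := by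
  have hst : 0 < s * t := mul_pos hs ht
  have hsqrt : √(s * t) ≤ s + t := Real.sqrt_le_iff.2 ⟨by positivity, by nlinarith⟩
  rw [← Real.mul_rpow hs.le ht.le, Real.rpow_neg hst.le, show (3 / 2 : ℝ) = 1 + 1 / 2 by norm_num,
    Real.rpow_add hst, Real.rpow_one, ← Real.sqrt_eq_rpow, ← one_div]
  gcongr

noncomputable def tornheimTerm (p : ℕ × ℕ) : ℝ :=
  1 / (((p.1 : ℝ) + 1) * ((p.2 : ℝ) + 1) * ((p.1 : ℝ) + p.2 + 2))

/-- The term `1 / (j k²)` of `ζ(1,2)` at `j = a + 1`, `k = a + b + 2`. -/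
noncomputable def zetaOneTwoTerm (p : ℕ × ℕ) : ℝ :=
  1 / (((p.1 : ℝ) + 1) * ((p.1 : ℝ) + p.2 + 2) ^ 2)

theorem summable_tornheimTerm : Summable tornheimTerm := by
  have hg : Summable fun n : ℕ => ((n : ℝ) + 1) ^ (-(3 / 2) : ℝ) := by
    simpa using (summable_nat_add_iff 1).2
      (Real.summable_nat_rpow.2 (by norm_num : -(3 / 2 : ℝ) < -1))
  refine (hg.mul_of_nonneg hg (fun _ => by positivity) fun _ => by positivity).of_nonneg_of_le
    (fun _ => by unfold tornheimTerm; positivity) fun p => ?_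
  unfold tornheimTerm
  convert one_div_mul_mul_add_le_rpow (s := p.1 + 1) (t := p.2 + 1) (by positivity) (by positivity)
    using 3
  ring

theorem hasSum_tornheimTerm_row (a : ℕ) :
    HasSum (fun b => tornheimTerm (a, b)) ((harmonic (a + 1) : ℝ) / ((a : ℝ) + 1) ^ 2) := by
  have hanti : Antitone fun n : ℕ => 1 / ((n : ℝ) + 1) := fun _ _ h => by dsimp only; gcongr
  have hterm : (fun b => tornheimTerm (a, b)) =
      fun b : ℕ => (1 / ((b : ℝ) + 1) - 1 / (((b + (a + 1) : ℕ) : ℝ) + 1)) / ((a : ℝ) + 1) ^ 2 := by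
    funext b
    unfold tornheimTerm
    push_cast
    field_simp
    ring
  have hharmonic : (harmonic (a + 1) : ℝ) = ∑ i ∈ range (a + 1), 1 / ((i : ℝ) + 1) := by
    simp [harmonic]
  rw [hterm, hharmonic]
  exact (hanti.hasSum_sub_add tendsto_one_div_add_atTop_nhds_zero_nat (a + 1)).div_const _

theorem hasSum_harmonic_succ_div_sq :
    HasSum (fun a : ℕ => (harmonic (a + 1) : ℝ) / ((a : ℝ) + 1) ^ 2) (∑' p, tornheimTerm p) :=
  summable_tornheimTerm.hasSum.prod_fiberwise hasSum_tornheimTerm_row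

theorem tornheimTerm_eq_add_swap (p : ℕ × ℕ) :
    tornheimTerm p = zetaOneTwoTerm p + zetaOneTwoTerm p.swap := by
  unfold tornheimTerm zetaOneTwoTerm
  simp only [Prod.fst_swap, Prod.snd_swap]
  field_simp
  ring

theorem summable_zetaOneTwoTerm : Summable zetaOneTwoTerm :=
  summable_tornheimTerm.of_nonneg_of_le (fun _ => by unfold zetaOneTwoTerm; positivity) fun p => by
    rw [tornheimTerm_eq_add_swap]
    exact le_add_of_nonneg_right (by unfold zetaOneTwoTerm; positivity)

theorem tsum_tornheimTerm : ∑' p, tornheimTerm p = 2 * ∑' p, zetaOneTwoTerm p := by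
  have hswap : Summable fun p : ℕ × ℕ => zetaOneTwoTerm p.swap :=
    (Equiv.prodComm ℕ ℕ).summable_iff.2 summable_zetaOneTwoTerm
  have htsum_swap : ∑' p : ℕ × ℕ, zetaOneTwoTerm p.swap = ∑' p, zetaOneTwoTerm p :=
    (Equiv.prodComm ℕ ℕ).tsum_eq zetaOneTwoTerm
  rw [tsum_congr tornheimTerm_eq_add_swap, summable_zetaOneTwoTerm.tsum_add hswap, htsum_swap]
  ring

theorem hasSum_harmonic_succ_div_add_two_sq :
    HasSum (fun n : ℕ => (harmonic (n + 1) : ℝ) / ((n : ℝ) + 2) ^ 2) (∑' p, zetaOneTwoTerm p) := by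
  convert summable_zetaOneTwoTerm.hasSum.sum_antidiagonal using 1
  funext n
  have hterm : ∀ p ∈ antidiagonal n,
      zetaOneTwoTerm p = 1 / ((p.1 : ℝ) + 1) / ((n : ℝ) + 2) ^ 2 := by
    intro p hp
    rw [HasAntidiagonal.mem_antidiagonal] at hp
    unfold zetaOneTwoTerm
    rw [← hp]
    push_cast
    rw [div_div]
  rw [sum_congr rfl hterm, ← sum_div, Nat.sum_antidiagonal_eq_sum_range_succ_mk]
  simp [harmonic]

def natProdEquivLtPair : ℕ × ℕ ≃ {p : ℕ × ℕ // 0 < p.1 ∧ p.1 < p.2} where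
  toFun x := ⟨(x.1 + 1, x.1 + x.2 + 2), by omega⟩
  invFun y := (y.1.1 - 1, y.1.2 - y.1.1 - 1)
  left_inv x := by ext <;> dsimp only <;> omega
  right_inv y := by ext <;> dsimp only <;> omega

theorem tsum_zetaOneTwoTerm : ∑' p, zetaOneTwoTerm p =
    ∑' p : {p : ℕ × ℕ // 0 < p.1 ∧ p.1 < p.2}, 1 / ((p.1.1 : ℝ) * (p.1.2 : ℝ) ^ 2) := by
  rw [← natProdEquivLtPair.tsum_eq]
  refine tsum_congr fun p => ?_
  simp [natProdEquivLtPair, zetaOneTwoTerm]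

/-- Euler's identity `ζ(3) = ζ(1,2)`:
`∑_{k ≥ 1} 1/k³ = ∑_{0 < j < k} 1/(j · k²)`. -/
theorem euler_zeta_three :
    (∑' k : ℕ, 1 / ((k : ℝ) + 1) ^ 3) =
      ∑' p : {p : ℕ × ℕ // 0 < p.1 ∧ p.1 < p.2},
        1 / ((p.1.1 : ℝ) * (p.1.2 : ℝ) ^ 2) := by
  set Z := ∑' p, zetaOneTwoTerm p
  have hshift : HasSum (fun a : ℕ => (harmonic a : ℝ) / ((a : ℝ) + 1) ^ 2) Z := by
    rw [← hasSum_nat_add_iff' 1]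
    simpa [add_assoc, one_add_one_eq_two] using hasSum_harmonic_succ_div_add_two_sq
  have hzeta3 : HasSum (fun k : ℕ => 1 / ((k : ℝ) + 1) ^ 3) (2 * Z - Z) := by
    have hterm : (fun k : ℕ => 1 / ((k : ℝ) + 1) ^ 3) = fun k : ℕ =>
        (harmonic (k + 1) : ℝ) / ((k : ℝ) + 1) ^ 2 - (harmonic k : ℝ) / ((k : ℝ) + 1) ^ 2 := by
      funext k
      rw [harmonic_succ]
      push_cast
      field_simp
      ring
    rw [hterm, ← tsum_tornheimTerm]
    exact hasSum_harmonic_succ_div_sq.sub hshift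
  rw [hzeta3.tsum_eq, ← tsum_zetaOneTwoTerm]
  ring
end

section
/- The identity ζ(2,3) = −(11/2) ζ(5) + 3 ζ(3) ζ(2) holds, i.e. ∑_{0<j<k} 1/(j² k³) = −(11/2) ∑_{k≥1} 1/k⁵ + 3 (∑_{k≥1} 1/k³)(∑_{k≥1} 1/k²). -/
/-!
Write `T(a,b,c) = ∑_{m,n ≥ 1} m⁻ᵃ n⁻ᵇ (m+n)⁻ᶜ` for the Tornheim double series, so that
`ζ(a,c) = T(a,0,c)`. Three linear relations between `ζ(2,3)`, `ζ(3,2)` and `ζ(1,4)` determine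
`ζ(2,3)`:
* shuffle: `ζ(2)ζ(3) = T(2,3,0) = 3ζ(2,3) + ζ(3,2) + 6ζ(1,4)`, by repeated use of the partial
  fraction `1/(mn) = (1/m + 1/n)/(m+n)`;
* stuffle: `ζ(2)ζ(3) = ζ(2,3) + ζ(3,2) + ζ(5)`, splitting the double sum into `m < n`, `m > n`
  and `m = n`;
* sum formula: `ζ(5) = ζ(3,2) + ζ(2,3) + ζ(1,4)`. Partial fractions give
  `T(3,1,1) = ζ(3,2) + ζ(2,3) + 2ζ(1,4)`, while summing `T(3,1,1)` over `n` first, using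
  `∑_n m/(n(n+m)) = H_m`, gives `∑_m H_m/m⁴ = ζ(1,4) + ζ(5)`.
-/

open Finset Filter Topology

namespace MultipleZeta

noncomputable def zetaNat (s : ℕ) : ℝ := ∑' k : ℕ, 1 / ((k : ℝ) + 1) ^ s

-- `tornheim a b c` is `T(a,b,c)`, with `m = q.1 + 1` and `n = q.2 + 1`.
noncomputable def tornheimTerm (a b c : ℕ) (q : ℕ × ℕ) : ℝ :=
  1 / (((q.1 : ℝ) + 1) ^ a * ((q.2 : ℝ) + 1) ^ b * ((q.1 : ℝ) + q.2 + 2) ^ c)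

noncomputable def tornheim (a b c : ℕ) : ℝ := ∑' q, tornheimTerm a b c q

lemma summable_one_div_nat_add_one_pow {s : ℕ} (hs : 2 ≤ s) :
    Summable fun k : ℕ => 1 / ((k : ℝ) + 1) ^ s := by
  have := (summable_nat_add_iff 1).2 (Real.summable_one_div_nat_pow.2 (by omega : 1 < s))
  exact_mod_cast this

lemma pow_two_mul_pow_two_le {a b c : ℕ} (h : 2 - a + (2 - b) ≤ c) {x y : ℝ}
    (hx : 1 ≤ x) (hy : 1 ≤ y) : x ^ 2 * y ^ 2 ≤ x ^ a * y ^ b * (x + y) ^ c :=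
  calc x ^ 2 * y ^ 2 ≤ x ^ (a + (2 - a)) * y ^ (b + (2 - b)) := by
        gcongr <;> first | assumption | omega
    _ = x ^ a * y ^ b * (x ^ (2 - a) * y ^ (2 - b)) := by ring
    _ ≤ x ^ a * y ^ b * ((x + y) ^ (2 - a) * (x + y) ^ (2 - b)) := by
        gcongr <;> linarith
    _ ≤ x ^ a * y ^ b * (x + y) ^ c := by
        rw [← pow_add]
        gcongr
        linarith

lemma tornheimTerm_nonneg (a b c : ℕ) (q : ℕ × ℕ) : 0 ≤ tornheimTerm a b c q := by
  unfold tornheimTerm; positivity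

-- In truncated subtraction, `2 - a + (2 - b) ≤ c` says `2 ≤ a + c`, `2 ≤ b + c`, `4 ≤ a + b + c`.
lemma summable_tornheimTerm {a b c : ℕ} (h : 2 - a + (2 - b) ≤ c) :
    Summable (tornheimTerm a b c) := by
  have h2 := summable_one_div_nat_add_one_pow le_rfl
  refine (h2.mul_of_nonneg h2 (fun _ => by positivity) (fun _ => by positivity)).of_nonneg_of_le
    (tornheimTerm_nonneg a b c) fun q => ?_
  rw [tornheimTerm, div_mul_div_comm, one_mul,
    show (q.1 : ℝ) + q.2 + 2 = (q.1 + 1) + (q.2 + 1) by ring]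
  exact one_div_le_one_div_of_le (by positivity) <| pow_two_mul_pow_two_le h
    (le_add_of_nonneg_left q.1.cast_nonneg) (le_add_of_nonneg_left q.2.cast_nonneg)

lemma tornheim_comm (a b c : ℕ) : tornheim a b c = tornheim b a c := by
  rw [tornheim, tornheim, ← (Equiv.prodComm ℕ ℕ).tsum_eq]
  refine tsum_congr fun q => ?_
  simp only [tornheimTerm, Equiv.prodComm_apply, Prod.fst_swap, Prod.snd_swap]
  ring_nf

lemma tornheim_succ_succ {a b c : ℕ} (h₁ : 2 - (a + 1) + (2 - b) ≤ c + 1)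
    (h₂ : 2 - a + (2 - (b + 1)) ≤ c + 1) :
    tornheim (a + 1) (b + 1) c = tornheim (a + 1) b (c + 1) + tornheim a (b + 1) (c + 1) := by
  rw [tornheim, tornheim, tornheim,
    ← (summable_tornheimTerm h₁).tsum_add (summable_tornheimTerm h₂)]
  refine tsum_congr fun q => ?_
  simp only [tornheimTerm]
  field_simp
  ring

lemma zetaNat_mul_zetaNat {a b : ℕ} (ha : 2 ≤ a) (hb : 2 ≤ b) :
    zetaNat a * zetaNat b = tornheim a b 0 := by
  have hterm (q : ℕ × ℕ) :
      1 / ((q.1 : ℝ) + 1) ^ a * (1 / ((q.2 : ℝ) + 1) ^ b) = tornheimTerm a b 0 q := by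
    rw [tornheimTerm, pow_zero, mul_one, div_mul_div_comm, one_mul]
  rw [zetaNat, zetaNat, tornheim, (summable_one_div_nat_add_one_pow ha).tsum_mul_tsum
    (summable_one_div_nat_add_one_pow hb)
    ((summable_tornheimTerm (by omega)).congr fun q => (hterm q).symm)]
  exact tsum_congr hterm

def prodTrichotomyEquiv : (ℕ × ℕ) ⊕ (ℕ × ℕ) ⊕ ℕ ≃ ℕ × ℕ where
  toFun
    | .inl p => (p.1, p.1 + p.2 + 1)
    | .inr (.inl p) => (p.1 + p.2 + 1, p.2)
    | .inr (.inr n) => (n, n)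
  invFun q :=
    if q.1 < q.2 then .inl (q.1, q.2 - q.1 - 1)
    else if q.2 < q.1 then .inr (.inl (q.1 - q.2 - 1, q.2))
    else .inr (.inr q.1)
  left_inv := by
    rintro (⟨x, y⟩ | ⟨x, y⟩ | n)
    · simp only [if_pos (by omega : x < x + y + 1)]
      congr; omega
    · simp only [if_neg (by omega : ¬ x + y + 1 < y), if_pos (by omega : y < x + y + 1)]
      congr; omega
    · simp
  right_inv := by
    rintro ⟨x, y⟩
    dsimp only
    split_ifs <;> ext <;> dsimp only <;> omega

lemma tsum_prod_eq_tsum_lt_add_tsum_gt_add_tsum_diag {E : Type*} [NormedAddCommGroup E]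
    [CompleteSpace E] {f : ℕ × ℕ → E} (hf : Summable f) :
    ∑' q, f q =
      ∑' p : ℕ × ℕ, f (p.1, p.1 + p.2 + 1) + ∑' p : ℕ × ℕ, f (p.1 + p.2 + 1, p.2) +
        ∑' n, f (n, n) := by
  have h₁ : HasSum (fun p : ℕ × ℕ => f (p.1, p.1 + p.2 + 1)) _ :=
    (hf.comp_injective (prodTrichotomyEquiv.injective.comp Sum.inl_injective)).hasSum
  have h₂ : HasSum (fun p : ℕ × ℕ => f (p.1 + p.2 + 1, p.2)) _ :=
    (hf.comp_injective ((prodTrichotomyEquiv.injective.comp Sum.inr_injective).comp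
      Sum.inl_injective)).hasSum
  have h₃ : HasSum (fun n : ℕ => f (n, n)) _ :=
    (hf.comp_injective ((prodTrichotomyEquiv.injective.comp Sum.inr_injective).comp
      Sum.inr_injective)).hasSum
  have h := h₁.sum (f := f ∘ prodTrichotomyEquiv) (h₂.sum h₃)
  rw [add_assoc]
  exact (prodTrichotomyEquiv.hasSum_iff.1 h).tsum_eq

lemma tornheim_stuffle {a b : ℕ} (ha : 2 ≤ a) (hb : 2 ≤ b) :
    tornheim a b 0 = tornheim a 0 b + tornheim 0 b a + zetaNat (a + b) := by
  rw [tornheim, tsum_prod_eq_tsum_lt_add_tsum_gt_add_tsum_diag (summable_tornheimTerm (by omega))]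
  have hlt (p : ℕ × ℕ) : tornheimTerm a b 0 (p.1, p.1 + p.2 + 1) = tornheimTerm a 0 b p := by
    simp only [tornheimTerm]; push_cast; ring_nf
  have hgt (p : ℕ × ℕ) : tornheimTerm a b 0 (p.1 + p.2 + 1, p.2) = tornheimTerm 0 b a p := by
    simp only [tornheimTerm]; push_cast; ring_nf
  have hdiag (n : ℕ) : tornheimTerm a b 0 (n, n) = 1 / ((n : ℝ) + 1) ^ (a + b) := by
    simp only [tornheimTerm]; ring_nf
  simp only [hlt, hgt, hdiag, tornheim, zetaNat]

lemma hasSum_sub_shift_of_antitone {u : ℕ → ℝ} (hu : Antitone u) (h0 : Tendsto u atTop (𝓝 0))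
    (n : ℕ) : HasSum (fun k => u k - u (k + n)) (∑ k ∈ range n, u k) := by
  refine (hasSum_iff_tendsto_nat_of_nonneg (fun k => sub_nonneg.2 (hu (by omega))) _).2 ?_
  have hpartial (N : ℕ) : ∑ k ∈ range N, (u k - u (k + n)) =
      ∑ k ∈ range n, u k - ∑ k ∈ range n, u (N + k) := by
    have h₁ := sum_range_add u N n
    have h₂ := sum_range_add u n N
    rw [add_comm n N] at h₂
    simp only [sum_sub_distrib, add_comm _ n]
    linarith
  have htail : Tendsto (fun N => ∑ k ∈ range n, u (N + k)) atTop (𝓝 0) := by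
    simpa using tendsto_finsetSum (range n) fun k _ => h0.comp (tendsto_add_atTop_nat k)
  simpa [hpartial] using tendsto_const_nhds.sub htail

lemma hasSum_harmonic (n : ℕ) :
    HasSum (fun k : ℕ => (n : ℝ) / (((k : ℝ) + 1) * ((k : ℝ) + n + 1))) (harmonic n) := by
  have hu : Antitone fun k : ℕ => 1 / ((k : ℝ) + 1) := fun a b h => by
    dsimp only; gcongr
  convert hasSum_sub_shift_of_antitone hu tendsto_one_div_add_atTop_nhds_zero_nat n using 1
  · ext k
    push_cast
    field_simp
    ring
  · simp [harmonic]

lemma hasSum_harmonic_div_pow {s : ℕ} (hs : 3 ≤ s) :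
    HasSum (fun n : ℕ => (harmonic n : ℝ) / ((n : ℝ) + 1) ^ s) (tornheim 1 0 s) := by
  -- the terms of `T(1,0,s)` indexed by `(m + n - 1, m - 1)`
  set f : ℕ × ℕ → ℝ := fun q =>
    if q.2 < q.1 then 1 / (((q.2 : ℝ) + 1) * ((q.1 : ℝ) + 1) ^ s) else 0
  have hg : Function.Injective fun p : ℕ × ℕ => (p.1 + p.2 + 1, p.1) := fun p p' h => by
    simp only [Prod.mk.injEq] at h
    ext <;> omega
  have hf : HasSum f (tornheim 1 0 s) := by
    rw [tornheim]
    refine (hg.hasSum_iff fun q hq => if_neg fun hlt => hq ⟨(q.2, q.1 - q.2 - 1), ?_⟩).1 ?_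
    · exact Prod.ext (by dsimp only; omega) rfl
    · refine (summable_tornheimTerm (by omega : 2 - 1 + (2 - 0) ≤ s)).hasSum.congr_fun
        fun p => ?_
      simp only [Function.comp_apply, if_pos (by omega : p.1 < p.1 + p.2 + 1), tornheimTerm]
      push_cast
      ring_nf
  refine hf.prod_fiberwise fun n => ?_
  have hfin : ∀ x ∉ range n, f (n, x) = 0 := fun x hx => if_neg (by simpa using hx)
  suffices h : (harmonic n : ℝ) / ((n : ℝ) + 1) ^ s = ∑ x ∈ range n, f (n, x) from
    h ▸ hasSum_sum_of_ne_finset_zero hfin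
  rw [harmonic]
  push_cast
  rw [sum_div]
  refine sum_congr rfl fun x hx => ?_
  simp only [f, if_pos (mem_range.1 hx)]
  field_simp

lemma hasSum_harmonic_succ_div_pow {s : ℕ} (hs : 2 ≤ s) :
    HasSum (fun n : ℕ => (harmonic (n + 1) : ℝ) / ((n : ℝ) + 1) ^ (s + 1)) (tornheim s 1 1) := by
  refine (summable_tornheimTerm (by omega : 2 - s + (2 - 1) ≤ 1)).hasSum.prod_fiberwise
    fun n => ?_
  refine ((hasSum_harmonic (n + 1)).div_const (((n : ℝ) + 1) ^ (s + 1))).congr_fun fun k => ?_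
  simp only [tornheimTerm]
  push_cast
  field_simp
  ring

lemma tornheim_eq_tornheim_one_zero_add_zetaNat {s : ℕ} (hs : 2 ≤ s) :
    tornheim s 1 1 = tornheim 1 0 (s + 1) + zetaNat (s + 2) := by
  refine (hasSum_harmonic_succ_div_pow hs).unique <| ((hasSum_harmonic_div_pow (by omega)).add
    (summable_one_div_nat_add_one_pow (by omega : 2 ≤ s + 2)).hasSum).congr_fun fun n => ?_
  rw [harmonic_succ]
  push_cast
  field_simp
  ring

def posLtEquiv : ℕ × ℕ ≃ {p : ℕ × ℕ // 0 < p.1 ∧ p.1 < p.2} where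
  toFun q := ⟨(q.1 + 1, q.1 + q.2 + 2), by omega, by omega⟩
  invFun p := (p.1.1 - 1, p.1.2 - p.1.1 - 1)
  left_inv q := by ext <;> dsimp only <;> omega
  right_inv := by
    rintro ⟨⟨j, k⟩, hj, hjk⟩
    ext <;> dsimp only at hj hjk ⊢ <;> omega

lemma tsum_pos_lt_eq_tornheim (a c : ℕ) :
    ∑' p : {p : ℕ × ℕ // 0 < p.1 ∧ p.1 < p.2}, 1 / ((p.1.1 : ℝ) ^ a * (p.1.2 : ℝ) ^ c) =
      tornheim a 0 c := by
  rw [← posLtEquiv.tsum_eq, tornheim]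
  refine tsum_congr fun q => ?_
  simp only [posLtEquiv, Equiv.coe_fn_mk, tornheimTerm]
  push_cast
  ring_nf

lemma tornheim_one_one_three : tornheim 1 1 3 = 2 * tornheim 1 0 4 := by
  rw [tornheim_succ_succ (a := 0) (b := 0) (c := 3) (by decide) (by decide), tornheim_comm 0 1 4]
  ring

lemma tornheim_three_one_one :
    tornheim 3 1 1 = tornheim 3 0 2 + tornheim 2 0 3 + 2 * tornheim 1 0 4 := by
  rw [tornheim_succ_succ (a := 2) (b := 0) (c := 1) (by decide) (by decide),
    tornheim_succ_succ (a := 1) (b := 0) (c := 2) (by decide) (by decide), tornheim_one_one_three]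
  ring

lemma tornheim_two_three_zero :
    tornheim 2 3 0 = 3 * tornheim 2 0 3 + tornheim 3 0 2 + 6 * tornheim 1 0 4 := by
  have h₁ : tornheim 2 3 0 = tornheim 2 2 1 + tornheim 1 3 1 :=
    tornheim_succ_succ (a := 1) (b := 2) (c := 0) (by decide) (by decide)
  have h₂ : tornheim 2 2 1 = tornheim 2 1 2 + tornheim 1 2 2 :=
    tornheim_succ_succ (a := 1) (b := 1) (c := 1) (by decide) (by decide)
  have h₃ : tornheim 2 1 2 = tornheim 2 0 3 + tornheim 1 1 3 :=
    tornheim_succ_succ (a := 1) (b := 0) (c := 2) (by decide) (by decide)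
  have h₄ : tornheim 1 2 2 = tornheim 1 1 3 + tornheim 0 2 3 :=
    tornheim_succ_succ (a := 0) (b := 1) (c := 2) (by decide) (by decide)
  rw [h₁, h₂, h₃, h₄, tornheim_comm 1 3 1, tornheim_three_one_one, tornheim_one_one_three,
    tornheim_comm 0 2 3]
  ring

end MultipleZeta

open MultipleZeta

/-- The identity `ζ(2,3) = -(11/2) ζ(5) + 3 ζ(3) ζ(2)`. -/
theorem zeta_two_three :
    (∑' p : {p : ℕ × ℕ // 0 < p.1 ∧ p.1 < p.2}, 1 / ((p.1.1 : ℝ) ^ 2 * (p.1.2 : ℝ) ^ 3)) =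
      -(11 / 2) * (∑' k : ℕ, 1 / ((k : ℝ) + 1) ^ 5) +
        3 * (∑' k : ℕ, 1 / ((k : ℝ) + 1) ^ 3) * (∑' k : ℕ, 1 / ((k : ℝ) + 1) ^ 2) := by
  rw [tsum_pos_lt_eq_tornheim]
  have shuffle := zetaNat_mul_zetaNat le_rfl (by norm_num : 2 ≤ 3)
  have stuffle := shuffle.trans (tornheim_stuffle le_rfl (by norm_num))
  rw [tornheim_two_three_zero] at shuffle
  rw [tornheim_comm 0 3 2] at stuffle
  have sum_formula := tornheim_three_one_one.symm.trans
    (tornheim_eq_tornheim_one_zero_add_zetaNat (by norm_num))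
  change tornheim 2 0 3 = -(11 / 2) * zetaNat 5 + 3 * zetaNat 3 * zetaNat 2
  linarith
end

section
/- The identity ζ(3,4) = 17 ζ(7) − 10 ζ(5) ζ(2) holds, i.e. ∑_{0<j<k} 1/(j³ k⁴) = 17 ∑_{k≥1} 1/k⁷ − 10 (∑_{k≥1} 1/k⁵)(∑_{k≥1} 1/k²). -/
/-!
Double shuffle in weight 7, writing `ζ(a, b) = ∑_{0<j<k} j⁻ᵃ k⁻ᵇ`.

* Stuffle: splitting `∑_{j,k} j⁻ᵃ k⁻ᵇ` according to `j < k`, `j = k`, `j > k` gives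
  `ζ(a) ζ(b) = ζ(a, b) + ζ(a + b) + ζ(b, a)`.
* Shuffle: Euler's partial-fraction decomposition of `1 / (x^a y^b)` into terms
  `1 / (x^i (x + y)^(a+b-i))` and `1 / (y^i (x + y)^(a+b-i))` expresses `ζ(3) ζ(4)` and
  `ζ(2) ζ(5)` through the double zeta values of weight 7.
* Sum formula `∑_{a+b=w} ζ(a, b) = ζ(w)`: a geometric sum turns `∑_a 1 / (x^a (x + y)^(w-a))`
  into `x^(1-w) (1/y - 1/(x+y)) - 1 / (y (x + y)^(w-1))`; summed over `y` the first part
  telescopes to `H_x / x^(w-1)`, the second sums to `ζ(1, w - 1)`, and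
  `∑_x H_x / x^(w-1) = ζ(w) + ζ(1, w - 1)`.

These five linear relations can be solved for `ζ(3, 4)`.
-/

open Filter Topology Finset

def trichotomyEquiv : (ℕ × ℕ) ⊕ ℕ ⊕ (ℕ × ℕ) ≃ ℕ × ℕ where
  toFun := Sum.elim (fun q => (q.1, q.1 + q.2 + 1)) <|
    Sum.elim (fun k => (k, k)) fun q => (q.1 + q.2 + 1, q.1)
  invFun p :=
    if p.1 < p.2 then .inl (p.1, p.2 - p.1 - 1)
    else if p.1 = p.2 then .inr (.inl p.1) else .inr (.inr (p.2, p.1 - p.2 - 1))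
  left_inv := by
    rintro (⟨i, j⟩ | k | ⟨i, j⟩) <;> grind
  right_inv := by
    rintro ⟨i, j⟩
    grind

theorem hasSum_of_lt_eq_gt {M : Type*} [AddCommMonoid M] [TopologicalSpace M] [ContinuousAdd M]
    {f : ℕ × ℕ → M} {a b c : M} (hlt : HasSum (fun q : ℕ × ℕ => f (q.1, q.1 + q.2 + 1)) a)
    (heq : HasSum (fun k => f (k, k)) b)
    (hgt : HasSum (fun q : ℕ × ℕ => f (q.1 + q.2 + 1, q.1)) c) :
    HasSum f (a + (b + c)) :=
  trichotomyEquiv.hasSum_iff.mp (hlt.sum (heq.sum hgt))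

theorem Antitone.hasSum_sub_comp_add {f : ℕ → ℝ} (hf : Antitone f)
    (h0 : Tendsto f atTop (𝓝 0)) (m : ℕ) :
    HasSum (fun n => f n - f (n + m)) (∑ i ∈ range m, f i) := by
  induction m with
  | zero => simp [hasSum_zero]
  | succ m ih =>
    have hstep : HasSum (fun n => f (n + m) - f (n + 1 + m)) (f m) := by
      rw [hasSum_iff_tendsto_nat_of_nonneg fun n => sub_nonneg.2 (hf (by omega))]
      simp_rw [Finset.sum_range_sub' (fun n => f (n + m))]
      simpa using tendsto_const_nhds.sub ((tendsto_add_atTop_iff_nat m).2 h0)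
    convert ih.add hstep using 1
    · ext n
      ring_nf
    · rw [sum_range_succ]

theorem hasSum_harmonic (m : ℕ) :
    HasSum (fun n : ℕ => 1 / ((n : ℝ) + 1) - 1 / ((n : ℝ) + 1 + m)) (harmonic m) := by
  have hanti : Antitone fun n : ℕ => 1 / ((n : ℝ) + 1) := fun _ _ => Nat.one_div_le_one_div
  convert hanti.hasSum_sub_comp_add tendsto_one_div_add_atTop_nhds_zero_nat m using 1
  · ext n
    push_cast
    ring_nf
  · simp [harmonic]

theorem sum_antidiagonal_one_div_pow_mul_pow {x y : ℝ} (hx : 0 < x) (hy : 0 < y) (n : ℕ) :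
    ∑ q ∈ antidiagonal n, 1 / (x ^ (q.1 + 1) * (x + y) ^ (q.2 + 2)) +
        1 / (y ^ 1 * (y + x) ^ (n + 2)) =
      1 / x ^ (n + 2) * (1 / y - 1 / (x + y)) := by
  induction n with
  | zero =>
    rw [Nat.antidiagonal_zero, sum_singleton]
    field_simp
    ring
  | succ n ih =>
    rw [Nat.sum_antidiagonal_succ']
    have hshift : ∑ q ∈ antidiagonal n, 1 / (x ^ (q.1 + 1) * (x + y) ^ (q.2 + 1 + 2)) =
        1 / (x + y) * ∑ q ∈ antidiagonal n, 1 / (x ^ (q.1 + 1) * (x + y) ^ (q.2 + 2)) := by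
      rw [mul_sum]
      refine sum_congr rfl fun q _ => ?_
      field_simp
      ring
    rw [hshift, eq_sub_of_add_eq ih]
    field_simp
    ring

namespace MZV

noncomputable def zeta (n : ℕ) : ℝ := ∑' k : ℕ, 1 / ((k : ℝ) + 1) ^ n

noncomputable def zeta₂ (a b : ℕ) : ℝ :=
  ∑' p : {p : ℕ × ℕ // 0 < p.1 ∧ p.1 < p.2}, 1 / ((p.1.1 : ℝ) ^ a * (p.1.2 : ℝ) ^ b)

theorem hasSum_zeta (n : ℕ) (hn : 2 ≤ n) :
    HasSum (fun k : ℕ => 1 / ((k : ℝ) + 1) ^ n) (zeta n) := by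
  refine Summable.hasSum ?_
  have := (summable_nat_add_iff 1).mpr (Real.summable_one_div_nat_pow.mpr hn)
  exact_mod_cast this

theorem hasSum_zeta_mul_zeta {a b : ℕ} (ha : 2 ≤ a) (hb : 2 ≤ b) :
    HasSum (fun p : ℕ × ℕ => 1 / (((p.1 : ℝ) + 1) ^ a * ((p.2 : ℝ) + 1) ^ b))
      (zeta a * zeta b) := by
  simp_rw [← one_div_mul_one_div]
  exact (hasSum_zeta a ha).mul (hasSum_zeta b hb) <|
    (hasSum_zeta a ha).summable.mul_of_nonneg (hasSum_zeta b hb).summable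
      (fun _ => by positivity) fun _ => by positivity

def posLtEquiv : ℕ × ℕ ≃ {p : ℕ × ℕ // 0 < p.1 ∧ p.1 < p.2} where
  toFun q := ⟨(q.1 + 1, q.1 + q.2 + 2), by omega⟩
  invFun p := (p.1.1 - 1, p.1.2 - p.1.1 - 1)
  left_inv q := by grind
  right_inv := by
    rintro ⟨⟨i, j⟩, h⟩
    grind

theorem summable_zeta₂_summand {a b : ℕ} (hb : 2 ≤ b) (hab : 4 ≤ a + b) :
    Summable fun p : ℕ × ℕ =>
      1 / (((p.1 : ℝ) + 1) ^ a * ((p.1 : ℝ) + 1 + ((p.2 : ℝ) + 1)) ^ b) := by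
  refine (hasSum_zeta_mul_zeta le_rfl le_rfl).summable.of_nonneg_of_le (fun _ => by positivity)
    fun p => one_div_le_one_div_of_le (by positivity) ?_
  set x : ℝ := p.1 + 1
  set y : ℝ := p.2 + 1
  have hx : 1 ≤ x := by simp [x]
  have hy : 1 ≤ y := by simp [y]
  calc x ^ 2 * y ^ 2 ≤ x ^ (a + (b - 2)) * y ^ 2 := by gcongr; omega
    _ = x ^ a * (x ^ (b - 2) * y ^ 2) := by ring
    _ ≤ x ^ a * ((x + y) ^ (b - 2) * (x + y) ^ 2) := by gcongr <;> linarith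
    _ = x ^ a * (x + y) ^ b := by rw [← pow_add, Nat.sub_add_cancel hb]

theorem hasSum_zeta₂ (a b : ℕ) (hb : 2 ≤ b) (hab : 4 ≤ a + b) :
    HasSum (fun p : ℕ × ℕ => 1 / (((p.1 : ℝ) + 1) ^ a * ((p.1 : ℝ) + 1 + ((p.2 : ℝ) + 1)) ^ b))
      (zeta₂ a b) := by
  convert (summable_zeta₂_summand hb hab).hasSum using 1
  rw [zeta₂, ← posLtEquiv.tsum_eq]
  refine tsum_congr fun q => ?_
  simp only [posLtEquiv, Equiv.coe_fn_mk]
  push_cast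
  ring_nf

theorem hasSum_zeta₂_swap (a b : ℕ) (hb : 2 ≤ b) (hab : 4 ≤ a + b) :
    HasSum (fun p : ℕ × ℕ => 1 / (((p.2 : ℝ) + 1) ^ a * ((p.2 : ℝ) + 1 + ((p.1 : ℝ) + 1)) ^ b))
      (zeta₂ a b) :=
  (Equiv.prodComm ℕ ℕ).hasSum_iff.mpr (hasSum_zeta₂ a b hb hab)

theorem zeta_mul_zeta {a b : ℕ} (ha : 2 ≤ a) (hb : 2 ≤ b) :
    zeta a * zeta b = zeta₂ a b + (zeta (a + b) + zeta₂ b a) := by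
  refine (hasSum_zeta_mul_zeta ha hb).unique (hasSum_of_lt_eq_gt ?_ ?_ ?_)
  · convert hasSum_zeta₂ a b hb (by omega) using 3 with q
    push_cast
    ring
  · convert hasSum_zeta (a + b) (by omega) using 3 with k
    ring
  · convert hasSum_zeta₂ b a ha (by omega) using 3 with q
    push_cast
    ring

theorem zeta_mul_zeta_three_four :
    zeta 3 * zeta 4 = 4 * zeta₂ 3 4 + zeta₂ 4 3 + 10 * zeta₂ 2 5 + 20 * zeta₂ 1 6 := by
  refine (hasSum_zeta_mul_zeta (a := 3) (b := 4) (by norm_num) (by norm_num)).unique ?_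
  convert ((((((hasSum_zeta₂ 3 4 (by norm_num) (by norm_num)).add
    ((hasSum_zeta₂ 2 5 (by norm_num) (by norm_num)).mul_left 4)).add
    ((hasSum_zeta₂ 1 6 (by norm_num) (by norm_num)).mul_left 10)).add
    (hasSum_zeta₂_swap 4 3 (by norm_num) (by norm_num))).add
    ((hasSum_zeta₂_swap 3 4 (by norm_num) (by norm_num)).mul_left 3)).add
    ((hasSum_zeta₂_swap 2 5 (by norm_num) (by norm_num)).mul_left 6)).add
    ((hasSum_zeta₂_swap 1 6 (by norm_num) (by norm_num)).mul_left 10) using 1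
  · ext p
    field_simp
    ring
  · ring

theorem zeta_mul_zeta_two_five :
    zeta 2 * zeta 5 =
      zeta₂ 5 2 + 2 * zeta₂ 4 3 + 3 * zeta₂ 3 4 + 5 * zeta₂ 2 5 + 10 * zeta₂ 1 6 := by
  refine (hasSum_zeta_mul_zeta (a := 2) (b := 5) (by norm_num) (by norm_num)).unique ?_
  convert ((((((hasSum_zeta₂ 2 5 (by norm_num) (by norm_num)).add
    ((hasSum_zeta₂ 1 6 (by norm_num) (by norm_num)).mul_left 5)).add
    (hasSum_zeta₂_swap 5 2 (by norm_num) (by norm_num))).add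
    ((hasSum_zeta₂_swap 4 3 (by norm_num) (by norm_num)).mul_left 2)).add
    ((hasSum_zeta₂_swap 3 4 (by norm_num) (by norm_num)).mul_left 3)).add
    ((hasSum_zeta₂_swap 2 5 (by norm_num) (by norm_num)).mul_left 4)).add
    ((hasSum_zeta₂_swap 1 6 (by norm_num) (by norm_num)).mul_left 5) using 1
  · ext p
    field_simp
    ring
  · ring

theorem hasSum_harmonic_div_pow (b : ℕ) (hb : 3 ≤ b) :
    HasSum (fun k : ℕ => (harmonic k : ℝ) / ((k : ℝ) + 1) ^ b) (zeta₂ 1 b) := by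
  set f : ℕ × ℕ → ℝ := fun p =>
    1 / (((p.1 : ℝ) + 1) ^ 1 * ((p.1 : ℝ) + 1 + ((p.2 : ℝ) + 1)) ^ b)
  have h := (HasAntidiagonal.sigmaAntidiagonalEquivProd (A := ℕ)).hasSum_iff.mpr
    (hasSum_zeta₂ 1 b (by omega) (by omega))
  have hdiag :
      HasSum (fun n : ℕ => (harmonic (n + 1) : ℝ) / ((n : ℝ) + 2) ^ b) (zeta₂ 1 b) := by
    refine h.sigma fun n => ?_
    show HasSum (fun q : antidiagonal n => f q) _
    convert hasSum_fintype _ using 1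
    calc (harmonic (n + 1) : ℝ) / ((n : ℝ) + 2) ^ b
        = ∑ i ∈ range (n + 1), 1 / ((i : ℝ) + 1) / ((n : ℝ) + 2) ^ b := by
          rw [← sum_div]; simp [harmonic]
      _ = ∑ q ∈ antidiagonal n, 1 / ((q.1 : ℝ) + 1) / ((n : ℝ) + 2) ^ b :=
          (Nat.sum_antidiagonal_eq_sum_range_succ
            (fun i _ => 1 / ((i : ℝ) + 1) / ((n : ℝ) + 2) ^ b) n).symm
      _ = ∑ q ∈ antidiagonal n, f q := sum_congr rfl fun q hq => by
          obtain rfl := mem_antidiagonal.mp hq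
          simp only [f]
          push_cast
          field_simp
          ring
      _ = ∑ q : antidiagonal n, f q := (sum_coe_sort _ _).symm
  rw [← hasSum_nat_add_iff' 1]
  simpa [add_assoc, one_add_one_eq_two] using hdiag

theorem sum_antidiagonal_zeta₂ (n : ℕ) (hn : 1 ≤ n) :
    ∑ q ∈ antidiagonal n, zeta₂ (q.1 + 1) (q.2 + 2) = zeta (n + 3) := by
  have hterms := (hasSum_sum (s := antidiagonal n) fun q hq =>
    hasSum_zeta₂ (q.1 + 1) (q.2 + 2) (by omega) (by have := mem_antidiagonal.mp hq; omega)).add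
      (hasSum_zeta₂_swap 1 (n + 2) (by omega) (by omega))
  have hrowSums : HasSum (fun k : ℕ => 1 / ((k : ℝ) + 1) ^ (n + 2) * harmonic (k + 1))
      (∑ q ∈ antidiagonal n, zeta₂ (q.1 + 1) (q.2 + 2) + zeta₂ 1 (n + 2)) := by
    refine HasSum.prod_fiberwise (f := fun p : ℕ × ℕ => 1 / ((p.1 : ℝ) + 1) ^ (n + 2) *
      (1 / ((p.2 : ℝ) + 1) - 1 / ((p.2 : ℝ) + 1 + ((p.1 + 1 : ℕ) : ℝ)))) ?_
      fun k => (hasSum_harmonic (k + 1)).mul_left _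
    convert hterms using 1
    ext p
    rw [sum_antidiagonal_one_div_pow_mul_pow (by positivity) (by positivity)]
    push_cast
    ring
  have hharmonic : HasSum (fun k : ℕ => 1 / ((k : ℝ) + 1) ^ (n + 2) * harmonic (k + 1))
      (zeta₂ 1 (n + 2) + zeta (n + 3)) := by
    convert (hasSum_harmonic_div_pow (n + 2) (by omega)).add
      (hasSum_zeta (n + 3) (by omega)) using 1
    ext k
    rw [harmonic_succ]
    push_cast
    field_simp
    ring
  linarith [hrowSums.unique hharmonic]

end MZV

open MZV

/-- The identity `ζ(3,4) = 17 ζ(7) - 10 ζ(5) ζ(2)`. -/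
theorem zeta_three_four :
    (∑' p : {p : ℕ × ℕ // 0 < p.1 ∧ p.1 < p.2}, 1 / ((p.1.1 : ℝ) ^ 3 * (p.1.2 : ℝ) ^ 4)) =
      17 * (∑' k : ℕ, 1 / ((k : ℝ) + 1) ^ 7) -
        10 * (∑' k : ℕ, 1 / ((k : ℝ) + 1) ^ 5) * (∑' k : ℕ, 1 / ((k : ℝ) + 1) ^ 2) := by
  have stuffle₂₅ : zeta 2 * zeta 5 = zeta₂ 2 5 + (zeta 7 + zeta₂ 5 2) :=
    zeta_mul_zeta (by norm_num) (by norm_num)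
  have stuffle₃₄ : zeta 3 * zeta 4 = zeta₂ 3 4 + (zeta 7 + zeta₂ 4 3) :=
    zeta_mul_zeta (by norm_num) (by norm_num)
  have sum_formula : zeta₂ 1 6 + (zeta₂ 2 5 + (zeta₂ 3 4 + (zeta₂ 4 3 + zeta₂ 5 2))) = zeta 7 := by
    simpa [Nat.sum_antidiagonal_succ] using sum_antidiagonal_zeta₂ 4 (by norm_num)
  change zeta₂ 3 4 = 17 * zeta 7 - 10 * zeta 5 * zeta 2
  linear_combination 5 * stuffle₂₅ + 2 * stuffle₃₄ - 2 * zeta_mul_zeta_three_four +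
    5 * zeta_mul_zeta_two_five + 10 * sum_formula
end
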